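/- For discrete random variables A, B, M: SD( M × A , (M,A)-joint ) ≤ E_{b ← B}[ SD( M|_{B=b} × A|_{B=b} , (M,A)|_{B=b} ) ] + SD( A × B , (A,B)-joint ). -/
import Mathlib


open scoped BigOperators Classical

noncomputable section

variable {Ω : Type*} [Fintype Ω]

/-- Probability of an event under a mass function `μ`. -/
def prEv (μ : Ω → ℝ) (E : Ω → Prop) : ℝ := ∑ ω, if E ω then μ ω else 0

/-- Distribution (pmf) of a random variable. -/
def rvDist (μ : Ω → ℝ) {α : Type*} (X : Ω → α) : α → ℝ :=
  fun a => prEv μ (fun ω => X ω = a)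

/-- Conditional distribution of `X` given the event `B = b`. -/
def condDist (μ : Ω → ℝ) {α β : Type*} (X : Ω → α) (B : Ω → β) (b : β) : α → ℝ :=
  fun a => prEv μ (fun ω => X ω = a ∧ B ω = b) / prEv μ (fun ω => B ω = b)

/-- Product of two distributions. -/
def prodDist {α β : Type*} (P : α → ℝ) (Q : β → ℝ) : α × β → ℝ := fun p => P p.1 * Q p.2

/-- Statistical (total variation) distance between two distributions on a finite set. -/
def SD {α : Type*} [Fintype α] (P Q : α → ℝ) : ℝ := (1/2) * ∑ a, |P a - Q a|

/-- Shannon entropy (base 2) of a distribution, with the convention `0 · log(1/0) = 0`. -/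
def H2 {α : Type*} [Fintype α] (P : α → ℝ) : ℝ :=
  ∑ a, if P a = 0 then 0 else P a * Real.logb 2 (1 / P a)

/-- Shannon entropy of a random variable. -/
def entRV (μ : Ω → ℝ) {α : Type*} [Fintype α] (X : Ω → α) : ℝ := H2 (rvDist μ X)

/-- Conditional mutual information `I(A;B|C)` (in bits). -/
def condMI (μ : Ω → ℝ) {α β γ : Type*} [Fintype α] [Fintype β] [Fintype γ]
    (A : Ω → α) (B : Ω → β) (C : Ω → γ) : ℝ :=
  entRV μ (fun ω => (A ω, C ω)) + entRV μ (fun ω => (B ω, C ω))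
    - entRV μ (fun ω => (A ω, B ω, C ω)) - entRV μ C

/-- The conditional probability measure given `Z = z`. -/
def condMeas (μ : Ω → ℝ) {ζ : Type*} (Z : Ω → ζ) (z : ζ) : Ω → ℝ :=
  fun ω => if Z ω = z then μ ω / prEv μ (fun ω' => Z ω' = z) else 0

/-- `μ` is a probability mass function. -/
def IsPMF (μ : Ω → ℝ) : Prop := (∀ ω, 0 ≤ μ ω) ∧ ∑ ω, μ ω = 1

end

section Aux

variable {Ω : Type*} [Fintype Ω]

lemma prEv_nonneg (μ : Ω → ℝ) (h : ∀ ω, 0 ≤ μ ω) (E : Ω → Prop) : 0 ≤ prEv μ E :=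
  Finset.sum_nonneg fun ω _ => by by_cases hE : E ω <;> simp [hE, h ω]

lemma prEv_mono (μ : Ω → ℝ) (h : ∀ ω, 0 ≤ μ ω) {E F : Ω → Prop}
    (hEF : ∀ ω, E ω → F ω) : prEv μ E ≤ prEv μ F := by
  refine Finset.sum_le_sum fun ω _ => ?_
  by_cases hE : E ω
  · simp [hE, hEF ω hE]
  · by_cases hF : F ω <;> simp [hE, hF, h ω]

lemma prEv_congr (μ : Ω → ℝ) {E F : Ω → Prop} (h : ∀ ω, E ω ↔ F ω) :
    prEv μ E = prEv μ F := by
  unfold prEv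
  exact Finset.sum_congr rfl fun ω _ => by simp only [h ω]

lemma sum_prEv_fst (μ : Ω → ℝ) {α : Type*} [Fintype α] (X : Ω → α) (E : Ω → Prop) :
    ∑ a : α, prEv μ (fun ω => X ω = a ∧ E ω) = prEv μ E := by
  unfold prEv
  rw [Finset.sum_comm]
  refine Finset.sum_congr rfl fun ω _ => ?_
  by_cases hE : E ω
  · simp [hE, Finset.sum_ite_eq]
  · simp [hE]

lemma sum_prEv_snd (μ : Ω → ℝ) {β : Type*} [Fintype β] (B : Ω → β) (E : Ω → Prop) :
    ∑ b : β, prEv μ (fun ω => E ω ∧ B ω = b) = prEv μ E := by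
  rw [Finset.sum_congr rfl fun b _ => prEv_congr μ (fun ω => and_comm)]
  exact sum_prEv_fst μ B E

lemma condDist_nonneg (μ : Ω → ℝ) (h : ∀ ω, 0 ≤ μ ω) {α β : Type*}
    (X : Ω → α) (B : Ω → β) (b : β) (a : α) : 0 ≤ condDist μ X B b a :=
  div_nonneg (prEv_nonneg μ h _) (prEv_nonneg μ h _)

lemma rvDist_mul_condDist (μ : Ω → ℝ) (h : ∀ ω, 0 ≤ μ ω) {α β : Type*}
    (X : Ω → α) (B : Ω → β) (b : β) (a : α) :
    rvDist μ B b * condDist μ X B b a = prEv μ (fun ω => X ω = a ∧ B ω = b) := by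
  unfold condDist rvDist
  by_cases hb : prEv μ (fun ω => B ω = b) = 0
  · have h0 : prEv μ (fun ω => X ω = a ∧ B ω = b) = 0 :=
      le_antisymm (hb ▸ prEv_mono μ h fun ω hω => hω.2) (prEv_nonneg μ h _)
    simp [hb, h0]
  · rw [mul_comm, div_mul_cancel₀ _ hb]

end Aux

/-- `SD(M × A, (M,A)) ≤ E_{b←B}[ SD(M|_b × A|_b, (M,A)|_b) ] + SD(A × B, (A,B))`. -/
theorem SD_prod_le_expected_cond_add {Ω α β γ : Type*}
    [Fintype Ω] [Fintype α] [Fintype β] [Fintype γ]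
    (μ : Ω → ℝ) (hμ : IsPMF μ)
    (A : Ω → α) (B : Ω → β) (M : Ω → γ) :
    SD (prodDist (rvDist μ M) (rvDist μ A)) (rvDist μ (fun ω => (M ω, A ω)))
      ≤ (∑ b : β, rvDist μ B b *
            SD (prodDist (condDist μ M B b) (condDist μ A B b))
               (condDist μ (fun ω => (M ω, A ω)) B b))
        + SD (prodDist (rvDist μ A) (rvDist μ B)) (rvDist μ (fun ω => (A ω, B ω))) := by
  classical
  obtain ⟨hμ0, -⟩ := hμ
  set pB := rvDist μ B with hpBdef
  set PA := rvDist μ A with hPAdef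
  set cM := condDist μ M B with hcMdef
  set cA := condDist μ A B with hcAdef
  set cJ := condDist μ (fun ω => (M ω, A ω)) B with hcJdef
  have hpB : ∀ b, 0 ≤ pB b := fun b => prEv_nonneg μ hμ0 _
  have hMb : ∀ b m, pB b * cM b m = prEv μ (fun ω => M ω = m ∧ B ω = b) :=
    fun b m => rvDist_mul_condDist μ hμ0 M B b m
  have hAb : ∀ b a, pB b * cA b a = prEv μ (fun ω => A ω = a ∧ B ω = b) :=
    fun b a => rvDist_mul_condDist μ hμ0 A B b a
  have hJb : ∀ b (p : γ × α), pB b * cJ b p = prEv μ (fun ω => (M ω, A ω) = p ∧ B ω = b) :=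
    fun b p => rvDist_mul_condDist μ hμ0 _ B b p
  have hPM : ∀ m, rvDist μ M m = ∑ b, pB b * cM b m := fun m => by
    rw [Finset.sum_congr rfl fun b _ => hMb b m]
    exact (sum_prEv_snd μ B (fun ω => M ω = m)).symm
  have hJoint : ∀ p : γ × α, rvDist μ (fun ω => (M ω, A ω)) p = ∑ b, pB b * cJ b p := fun p => by
    rw [Finset.sum_congr rfl fun b _ => hJb b p]
    exact (sum_prEv_snd μ B (fun ω => (M ω, A ω) = p)).symm
  have hsumM : ∀ b, ∑ m, pB b * cM b m = pB b := fun b => by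
    rw [Finset.sum_congr rfl fun m _ => hMb b m]
    exact sum_prEv_fst μ M (fun ω => B ω = b)
  have hAB : ∀ a b, rvDist μ (fun ω => (A ω, B ω)) (a, b)
      = prEv μ (fun ω => A ω = a ∧ B ω = b) :=
    fun a b => prEv_congr μ (fun ω => by simp [Prod.ext_iff])
  -- pointwise key bound
  have key : ∀ p : γ × α,
      |prodDist (rvDist μ M) PA p - rvDist μ (fun ω => (M ω, A ω)) p|
        ≤ (∑ b, pB b * |cM b p.1 * cA b p.2 - cJ b p|)
          + (∑ b, (pB b * cM b p.1) * |PA p.2 - cA b p.2|) := by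
    intro p
    have e1 : prodDist (rvDist μ M) PA p = ∑ b, (pB b * cM b p.1) * PA p.2 := by
      rw [← Finset.sum_mul, ← hPM p.1]; rfl
    rw [e1, hJoint p, ← Finset.sum_sub_distrib]
    refine (Finset.abs_sum_le_sum_abs _ _).trans ?_
    rw [← Finset.sum_add_distrib]
    refine Finset.sum_le_sum fun b _ => ?_
    have h1 : pB b * cM b p.1 * PA p.2 - pB b * cJ b p
        = (pB b * cM b p.1) * (PA p.2 - cA b p.2) + pB b * (cM b p.1 * cA b p.2 - cJ b p) := by
      ring
    rw [h1]
    refine (abs_add_le _ _).trans (le_of_eq ?_)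
    rw [abs_mul, abs_mul, abs_mul, abs_of_nonneg (hpB b),
      abs_of_nonneg (condDist_nonneg μ hμ0 M B b p.1)]
    ring
  have hT1 : (1/2 : ℝ) * ∑ p : γ × α, ∑ b, pB b * |cM b p.1 * cA b p.2 - cJ b p|
      = ∑ b, pB b * SD (prodDist (cM b) (cA b)) (cJ b) := by
    rw [Finset.sum_comm, Finset.mul_sum]
    refine Finset.sum_congr rfl fun b _ => ?_
    rw [← Finset.mul_sum]
    unfold SD prodDist
    ring
  have hT2 : (1/2 : ℝ) * ∑ p : γ × α, ∑ b, (pB b * cM b p.1) * |PA p.2 - cA b p.2|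
      = SD (prodDist PA pB) (rvDist μ (fun ω => (A ω, B ω))) := by
    rw [Finset.sum_comm]
    have hb : ∀ b, ∑ p : γ × α, (pB b * cM b p.1) * |PA p.2 - cA b p.2|
        = ∑ a, |PA a * pB b - rvDist μ (fun ω => (A ω, B ω)) (a, b)| := by
      intro b
      rw [Fintype.sum_prod_type]
      have e : ∀ x : γ, (∑ y : α, pB b * cM b (x, y).1 * |PA (x, y).2 - cA b (x, y).2|)
          = pB b * cM b x * ∑ y : α, |PA y - cA b y| := fun x => by
        rw [Finset.mul_sum]
      rw [Finset.sum_congr rfl fun x _ => e x, ← Finset.sum_mul, hsumM b, Finset.mul_sum]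
      refine Finset.sum_congr rfl fun a _ => ?_
      rw [hAB a b, ← hAb b a,
        show PA a * pB b - pB b * cA b a = pB b * (PA a - cA b a) by ring,
        abs_mul, abs_of_nonneg (hpB b)]
    rw [Finset.sum_congr rfl fun b _ => hb b]
    unfold SD prodDist
    rw [Fintype.sum_prod_type, Finset.sum_comm]
  calc SD (prodDist (rvDist μ M) PA) (rvDist μ (fun ω => (M ω, A ω)))
      ≤ (1/2 : ℝ) * ∑ p : γ × α,
          ((∑ b, pB b * |cM b p.1 * cA b p.2 - cJ b p|)
            + (∑ b, (pB b * cM b p.1) * |PA p.2 - cA b p.2|)) := by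
        unfold SD
        refine mul_le_mul_of_nonneg_left (Finset.sum_le_sum fun p _ => key p) (by norm_num)
    _ = (∑ b, pB b * SD (prodDist (cM b) (cA b)) (cJ b))
          + SD (prodDist PA pB) (rvDist μ (fun ω => (A ω, B ω))) := by
        rw [Finset.sum_add_distrib, mul_add, hT1, hT2]
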